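/- Let U : ℝ^D → ℝ be measurable with exp(−U) integrable and positive integral, and let (U_n) be a sequence of measurable functions with exp(−U_n) integrable with positive integral for each n, such that ‖U_n − U‖_∞ → 0 as n → ∞. Let P = exp(−U)/∫exp(−U) and Q_n = exp(−U_n)/∫exp(−U_n) be the associated probability densities. Then D_KL(P‖Q_n) → 0 as n → ∞. -/

import Mathlib

open MeasureTheory Real Filter

/-!
Write `Z_U = ∫ exp (-U)`. Since `log (P / Q_n) = (U_n - U) + (log Z_{U_n} - log Z_U)` pointwise,
the divergence is `∫ P (U_n - U) + log (Z_{U_n} / Z_U)`. If `|U_n - U| ≤ ε` everywhere, the first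
term is at most `ε` because `P` is a probability density, and `exp (-ε) ≤ Z_{U_n} / Z_U ≤ exp ε`
bounds the second by `ε`. Hence the divergence is at most `2 ε`.
-/

section Gibbs

variable {α : Type*} [MeasurableSpace α] {μ : Measure α} {U V : α → ℝ} {ε : ℝ}

noncomputable def gibbsDensity (μ : Measure α) (U : α → ℝ) (x : α) : ℝ :=
  exp (-U x) / ∫ y, exp (-U y) ∂μ

lemma gibbsDensity_nonneg (hZ : 0 ≤ ∫ y, exp (-U y) ∂μ) (x : α) : 0 ≤ gibbsDensity μ U x :=
  div_nonneg (exp_pos _).le hZ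

lemma integrable_gibbsDensity (hU : Integrable (fun x => exp (-U x)) μ) :
    Integrable (gibbsDensity μ U) μ :=
  hU.div_const _

lemma integral_gibbsDensity (hZ : ∫ y, exp (-U y) ∂μ ≠ 0) : ∫ x, gibbsDensity μ U x ∂μ = 1 := by
  unfold gibbsDensity
  rw [integral_div, div_self hZ]

lemma log_gibbsDensity_div (hZU : ∫ y, exp (-U y) ∂μ ≠ 0) (hZV : ∫ y, exp (-V y) ∂μ ≠ 0)
    (x : α) :
    log (gibbsDensity μ U x / gibbsDensity μ V x) =
      V x - U x + (log (∫ y, exp (-V y) ∂μ) - log (∫ y, exp (-U y) ∂μ)) := by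
  unfold gibbsDensity
  rw [log_div (by positivity) (by positivity), log_div (exp_pos _).ne' hZU,
    log_div (exp_pos _).ne' hZV, log_exp, log_exp]
  ring

lemma integral_exp_neg_le_exp_mul (hU : Integrable (fun x => exp (-U x)) μ)
    (hV : Integrable (fun x => exp (-V x)) μ) (h : ∀ x, U x - V x ≤ ε) :
    ∫ x, exp (-V x) ∂μ ≤ exp ε * ∫ x, exp (-U x) ∂μ := by
  rw [← integral_const_mul]
  refine integral_mono hV (hU.const_mul _) fun x => ?_
  rw [← exp_add, exp_le_exp]
  linarith [h x]

lemma integral_exp_neg_pos_of_sub_le (hU : Integrable (fun x => exp (-U x)) μ)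
    (hV : Integrable (fun x => exp (-V x)) μ) (hZ : 0 < ∫ x, exp (-U x) ∂μ)
    (h : ∀ x, V x - U x ≤ ε) : 0 < ∫ x, exp (-V x) ∂μ :=
  pos_of_mul_pos_right (hZ.trans_le (integral_exp_neg_le_exp_mul hV hU h)) (exp_pos _).le

lemma abs_log_integral_exp_neg_sub_le (hU : Integrable (fun x => exp (-U x)) μ)
    (hV : Integrable (fun x => exp (-V x)) μ) (hZ : 0 < ∫ x, exp (-U x) ∂μ)
    (h : ∀ x, |V x - U x| ≤ ε) :
    |log (∫ x, exp (-V x) ∂μ) - log (∫ x, exp (-U x) ∂μ)| ≤ ε := by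
  have hUV : ∀ x, U x - V x ≤ ε := fun x => by linarith [(abs_le.mp (h x)).1]
  have hVU : ∀ x, V x - U x ≤ ε := fun x => (abs_le.mp (h x)).2
  have hZV := integral_exp_neg_pos_of_sub_le hU hV hZ hVU
  have hupper := log_le_log hZV (integral_exp_neg_le_exp_mul hU hV hUV)
  have hlower := log_le_log hZ (integral_exp_neg_le_exp_mul hV hU hVU)
  rw [log_mul (exp_pos _).ne' hZ.ne', log_exp] at hupper
  rw [log_mul (exp_pos _).ne' hZV.ne', log_exp] at hlower
  exact abs_le.mpr ⟨by linarith, by linarith⟩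

lemma abs_integral_gibbsDensity_mul_le {g : α → ℝ} (hU : Integrable (fun x => exp (-U x)) μ)
    (hZ : 0 < ∫ y, exp (-U y) ∂μ) (hg : ∀ x, |g x| ≤ ε) :
    |∫ x, gibbsDensity μ U x * g x ∂μ| ≤ ε := by
  calc |∫ x, gibbsDensity μ U x * g x ∂μ|
      ≤ ∫ x, gibbsDensity μ U x * ε ∂μ := by
        rw [← Real.norm_eq_abs]
        refine norm_integral_le_of_norm_le ((integrable_gibbsDensity hU).mul_const ε)
          (Eventually.of_forall fun x => ?_)
        rw [Real.norm_eq_abs, abs_mul, abs_of_nonneg (gibbsDensity_nonneg hZ.le x)]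
        exact mul_le_mul_of_nonneg_left (hg x) (gibbsDensity_nonneg hZ.le x)
    _ = ε := by rw [integral_mul_const, integral_gibbsDensity hZ.ne', one_mul]

lemma abs_integral_gibbsDensity_mul_log_div_le (hUm : Measurable U) (hVm : Measurable V)
    (hU : Integrable (fun x => exp (-U x)) μ) (hV : Integrable (fun x => exp (-V x)) μ)
    (hZ : 0 < ∫ x, exp (-U x) ∂μ) (h : ∀ x, |V x - U x| ≤ ε) :
    |∫ x, gibbsDensity μ U x * log (gibbsDensity μ U x / gibbsDensity μ V x) ∂μ| ≤ 2 * ε := by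
  have hZV := integral_exp_neg_pos_of_sub_le hU hV hZ fun x => (abs_le.mp (h x)).2
  have hint : Integrable (fun x => gibbsDensity μ U x * (V x - U x)) μ :=
    (integrable_gibbsDensity hU).mul_bdd (hVm.sub hUm).aestronglyMeasurable
      (Eventually.of_forall fun x => (Real.norm_eq_abs _).trans_le (h x))
  simp_rw [log_gibbsDensity_div hZ.ne' hZV.ne', mul_add]
  rw [integral_add hint ((integrable_gibbsDensity hU).mul_const _), integral_mul_const,
    integral_gibbsDensity hZ.ne', one_mul, two_mul]
  exact (abs_add_le _ _).trans (add_le_add (abs_integral_gibbsDensity_mul_le hU hZ h)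
    (abs_log_integral_exp_neg_sub_le hU hV hZ h))

end Gibbs

theorem kl_tendsto_zero_of_uniform_approx_general (D : ℕ)
    (U : (Fin D → ℝ) → ℝ) (Un : ℕ → (Fin D → ℝ) → ℝ)
    (hU : Measurable U) (hUn : ∀ n, Measurable (Un n))
    (hUi : Integrable (fun q => exp (-U q)))
    (hUni : ∀ n, Integrable (fun q => exp (-Un n q)))
    (hIP : 0 < ∫ q, exp (-U q))
    (hbdd : ∀ n, BddAbove (Set.range fun q => |Un n q - U q|))
    (hconv : Tendsto (fun n => ⨆ q, |Un n q - U q|) atTop (nhds 0))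
    (P : (Fin D → ℝ) → ℝ) (Q : ℕ → (Fin D → ℝ) → ℝ)
    (hP : P = fun q => exp (-U q) / ∫ q', exp (-U q'))
    (hQ : Q = fun n q => exp (-Un n q) / ∫ q', exp (-Un n q')) :
    Tendsto (fun n => ∫ q, P q * log (P q / Q n q)) atTop (nhds 0) := by
  subst hP hQ
  refine squeeze_zero_norm (fun n => ?_) (by simpa using hconv.const_mul 2)
  exact abs_integral_gibbsDensity_mul_log_div_le hU (hUn n) hUi (hUni n) hIP
    fun q => le_ciSup (hbdd n) q

/-- If the potentials `U n` converge uniformly to `U` (the sup norms of the differences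
tend to `0`), then the KL divergence from the target Gibbs density `P ∝ exp (-U)` to the
approximate Gibbs densities `Q n ∝ exp (-U n)` tends to `0`. -/
theorem kl_tendsto_zero_of_uniform_approx (D : ℕ)
    (U : (Fin D → ℝ) → ℝ) (Un : ℕ → (Fin D → ℝ) → ℝ)
    (hU : Measurable U) (hUn : ∀ n, Measurable (Un n))
    (hUi : Integrable (fun q => exp (-U q)))
    (hUni : ∀ n, Integrable (fun q => exp (-Un n q)))
    (hIP : 0 < ∫ q, exp (-U q))
    (hIQ : ∀ n, 0 < ∫ q, exp (-Un n q))
    (hbdd : ∀ n, BddAbove (Set.range fun q => |Un n q - U q|))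
    (hconv : Tendsto (fun n => ⨆ q, |Un n q - U q|) atTop (nhds 0))
    (P : (Fin D → ℝ) → ℝ) (Q : ℕ → (Fin D → ℝ) → ℝ)
    (hP : P = fun q => exp (-U q) / ∫ q', exp (-U q'))
    (hQ : Q = fun n q => exp (-Un n q) / ∫ q', exp (-Un n q')) :
    Tendsto (fun n => ∫ q, P q * log (P q / Q n q)) atTop (nhds 0) :=
  kl_tendsto_zero_of_uniform_approx_general D U Un hU hUn hUi hUni hIP hbdd hconv P Q hP hQ
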